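/- arXiv:2208.08321 — 2 statements merged into one kernel-verified Lean document; each statement's English description precedes it below -/
import Mathlib

section
/- Geometric Lemma (Nash-type decomposition): Let d ≥ 2 and let K be a compact subset of the set S^{d×d}_+ of symmetric positive definite real d×d matrices. Then there exist a finite set Λ ⊂ ℤ^d \ {0} and smooth functions Γ_k : K → ℝ for k ∈ Λ such that for every R ∈ K one has R = Σ_{k∈Λ} Γ_k(R)² (e_k ⊗ e_k), where e_k := k/|k| is the unit vector in the direction of k. -/
/-!
Near a positive definite `R₀`, write `R₀ - a d I = ∑ₗ bₗ ⊗ bₗ` for a small `a > 0` and replace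
each row `bₗ` by a rational vector `qₗ`. For `R` near `R₀` the remainder
`W = R - a d I - ∑ₗ qₗ ⊗ qₗ` is close to `0`, and the polarization identity
`W + a d I = ∑ᵢⱼ ((a + Wᵢⱼ)/4) (eᵢ + eⱼ) ⊗ (eᵢ + eⱼ) + ((a - Wᵢⱼ)/4) (eᵢ - eⱼ) ⊗ (eᵢ - eⱼ)`
expresses `R` as a combination of integer rank-one matrices with coefficients that are affine in
`R` and positive near `R₀`. A smooth partition of unity `∑ φ_z² = 1` on `K` glues these local
decompositions: `φ_z √c` is smooth because `c > 0` on the support of `φ_z`. Coinciding integer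
directions are made distinct by rescaling them, which does not change `e_k`.
-/

noncomputable section

def intVecNorm {d : ℕ} (k : Fin d → ℤ) : ℝ := Real.sqrt (∑ i, ((k i : ℝ)) ^ 2)

/-- The unit vector `e_k = k/|k|` in the direction of `k ∈ ℤ^d`. -/
def unitVec {d : ℕ} (k : Fin d → ℤ) : Fin d → ℝ := fun i => (k i : ℝ) / intVecNorm k

open Finset
open scoped ContDiff Topology

def intOuter {d : ℕ} (k : Fin d → ℤ) : Fin d → Fin d → ℝ := fun i j => (k i : ℝ) * k j

section unitVec

variable {d : ℕ}

lemma sq_intVecNorm (k : Fin d → ℤ) : intVecNorm k ^ 2 = ∑ i, (k i : ℝ) ^ 2 :=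
  Real.sq_sqrt (by positivity)

lemma intVecNorm_nsmul (n : ℕ) (k : Fin d → ℤ) : intVecNorm (n • k) = n * intVecNorm k := by
  simp only [intVecNorm, Pi.smul_apply, nsmul_eq_mul, Int.cast_mul, Int.cast_natCast, mul_pow,
    ← Finset.mul_sum]
  rw [Real.sqrt_mul (by positivity), Real.sqrt_sq n.cast_nonneg]

lemma unitVec_nsmul {n : ℕ} (hn : 0 < n) (k : Fin d → ℤ) : unitVec (n • k) = unitVec k := by
  ext i
  simp only [unitVec, intVecNorm_nsmul]
  simp only [Pi.smul_apply, nsmul_eq_mul, Int.cast_mul, Int.cast_natCast]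
  exact mul_div_mul_left _ _ (by positivity)

lemma intOuter_eq_sq_intVecNorm_mul (k : Fin d → ℤ) (p q : Fin d) :
    intOuter k p q = intVecNorm k ^ 2 * (unitVec k p * unitVec k q) := by
  rw [intOuter]
  rcases eq_or_ne (intVecNorm k) 0 with h | h
  · have hp : (k p : ℝ) ^ 2 = 0 := by
      refine le_antisymm ?_ (sq_nonneg _)
      calc (k p : ℝ) ^ 2 ≤ ∑ i, (k i : ℝ) ^ 2 :=
            Finset.single_le_sum (fun i _ => sq_nonneg ((k i : ℝ))) (mem_univ p)
        _ = 0 := by rw [← sq_intVecNorm, h, sq, mul_zero]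
    simp [h, pow_eq_zero_iff two_ne_zero |>.1 hp]
  · simp only [unitVec]
    field_simp

end unitVec

theorem sum_intOuter_add_sum_intOuter_sub {d : ℕ} (W : Fin d → Fin d → ℝ)
    (hW : ∀ i j, W i j = W j i) (a : ℝ) :
    ∑ ij : Fin d × Fin d,
        ((a + W ij.1 ij.2) / 4) • intOuter (Pi.single ij.1 1 + Pi.single ij.2 1) +
      ∑ ij : Fin d × Fin d,
        ((a - W ij.1 ij.2) / 4) • intOuter (Pi.single ij.1 1 - Pi.single ij.2 1) =
      W + fun p q => if p = q then a * d else 0 := by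
  ext p q
  rw [← Finset.sum_add_distrib]
  have hterm (i j : Fin d) : ((a + W i j) / 4) * intOuter (Pi.single i 1 + Pi.single j 1) p q +
      ((a - W i j) / 4) * intOuter (Pi.single i 1 - Pi.single j 1) p q =
      a / 2 * ((if p = i then 1 else 0) * (if q = i then 1 else 0) +
        (if p = j then 1 else 0) * (if q = j then 1 else 0)) +
      W i j / 2 * ((if p = i then 1 else 0) * (if q = j then 1 else 0) +
        (if p = j then 1 else 0) * (if q = i then 1 else 0)) := by
    simp only [intOuter, Pi.add_apply, Pi.sub_apply, Pi.single_apply]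
    push_cast
    ring
  simp only [Finset.sum_apply, Pi.add_apply, Pi.smul_apply, smul_eq_mul, hterm,
    Fintype.sum_prod_type]
  simp only [mul_ite, mul_one, mul_zero, mul_add, sum_add_distrib, sum_ite_irrel, sum_const,
    card_univ, Fintype.card_fin, nsmul_eq_mul, sum_ite_eq, mem_univ, ↓reduceIte,
    hW q p, add_halves]
  split_ifs <;> ring

open scoped MatrixOrder in
theorem Matrix.PosDef.exists_posSemidef_sub_smul_one {n : Type*} [Fintype n] [DecidableEq n]
    {M : Matrix n n ℝ} (hM : M.PosDef) : ∃ r : ℝ, 0 < r ∧ ∀ s ≤ r, (M - s • 1).PosSemidef := by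
  cases isEmpty_or_nonempty n
  · exact ⟨1, one_pos, fun s _ => Subsingleton.elim (0 : Matrix n n ℝ) (M - s • 1) ▸ .zero⟩
  obtain ⟨r, hr, hrM⟩ := (CFC.exists_pos_algebraMap_le_iff hM.isHermitian.isSelfAdjoint).2
    fun x hx => hM.isStrictlyPositive.spectrum_pos hx
  refine ⟨r, hr, fun s hs => ?_⟩
  rw [← Matrix.le_iff, ← Algebra.algebraMap_eq_smul_one]
  exact (algebraMap_mono _ hs).trans hrM

theorem exists_intCast_div_near {ι : Type*} [Fintype ι] (x : ι → ℝ) {η : ℝ} (hη : 0 < η) :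
    ∃ (N : ℕ) (k : ι → ℤ), 0 < N ∧ dist x (fun i => (k i : ℝ) / N) < η := by
  obtain ⟨N, hN⟩ := exists_nat_gt η⁻¹
  have hN0 : (0 : ℝ) < N := (inv_pos.2 hη).trans hN
  refine ⟨N, fun i => round (N * x i), by exact_mod_cast hN0, (dist_pi_lt_iff hη).2 fun i => ?_⟩
  calc dist (x i) (round (N * x i) / N) = |N * x i - round (N * x i)| / N := by
        rw [Real.dist_eq, ← abs_of_pos hN0, ← abs_div, abs_of_pos hN0]
        congr 1
        field_simp
    _ ≤ 1 / 2 / N := by gcongr; exact abs_sub_round _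
    _ < η := by
        rw [div_lt_iff₀ hN0]
        have := (inv_lt_iff_one_lt_mul₀' hη).1 hN
        linarith

theorem exists_sum_intOuter_near {ι : Type*} [Fintype ι] {d : ℕ} (b : ι → Fin d → ℝ) {η : ℝ}
    (hη : 0 < η) :
    ∃ (N : ι → ℕ) (k : ι → Fin d → ℤ), (∀ l, 0 < N l) ∧
      dist (fun p q => ∑ l, b l p * b l q) (∑ l, ((N l : ℝ) ^ 2)⁻¹ • intOuter (k l)) < η := by
  have hcont : Continuous fun b : ι → Fin d → ℝ => fun p q => ∑ l, b l p * b l q := by fun_prop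
  obtain ⟨δ, hδ, hball⟩ := Metric.continuous_iff.1 hcont b η hη
  choose N k hN hk using fun l => exists_intCast_div_near (b l) hδ
  refine ⟨N, k, hN, ?_⟩
  rw [dist_comm]
  convert hball (fun l i => k l i / N l) ((dist_pi_lt_iff hδ).2 fun l => by
    rw [dist_comm]; exact hk l) using 2
  ext p q
  simp only [Finset.sum_apply, Pi.smul_apply, smul_eq_mul, intOuter]
  refine sum_congr rfl fun l _ => ?_
  field_simp

theorem exists_sub_diagonal_eq_gram {d : ℕ} {R₀ : Fin d → Fin d → ℝ}
    (hsymm : ∀ i j, R₀ i j = R₀ j i)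
    (hpos : ∀ x : Fin d → ℝ, x ≠ 0 → 0 < ∑ i, ∑ j, x i * R₀ i j * x j) :
    ∃ a : ℝ, 0 < a ∧ ∃ B : Fin d → Fin d → ℝ,
      ∀ p q, R₀ p q - (if p = q then a * d else 0) = ∑ l, B l p * B l q := by
  have hM : (Matrix.of R₀).PosDef := .of_dotProduct_mulVec_pos (by ext i j; exact hsymm j i)
    fun x hx => by
      simpa [dotProduct, Matrix.mulVec, Finset.mul_sum, mul_assoc] using hpos x hx
  obtain ⟨r, hr, hrM⟩ := hM.exists_posSemidef_sub_smul_one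
  have had : r / (d + 1) * d ≤ r := by
    rw [div_mul_eq_mul_div, div_le_iff₀ (by positivity)]
    nlinarith
  open scoped MatrixOrder in
  obtain ⟨B, hB⟩ := CStarAlgebra.nonneg_iff_eq_star_mul_self.mp (hrM _ had).nonneg
  refine ⟨r / (d + 1), by positivity, B, fun p q => ?_⟩
  simpa [Matrix.mul_apply, Matrix.one_apply] using congrFun₂ hB p q

theorem exists_local_decomposition {d : ℕ} {R₀ : Fin d → Fin d → ℝ}
    (hsymm : ∀ i j, R₀ i j = R₀ j i)
    (hpos : ∀ x : Fin d → ℝ, x ≠ 0 → 0 < ∑ i, ∑ j, x i * R₀ i j * x j) :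
    ∃ (k : Fin d ⊕ (Fin d × Fin d) ⊕ (Fin d × Fin d) → Fin d → ℤ)
      (c : Fin d ⊕ (Fin d × Fin d) ⊕ (Fin d × Fin d) → (Fin d → Fin d → ℝ) → ℝ),
      (∀ t, ContDiff ℝ ω (c t)) ∧ (∀ t, 0 < c t R₀) ∧
      ∀ R : Fin d → Fin d → ℝ, (∀ i j, R i j = R j i) → R = ∑ t, c t R • intOuter (k t) := by
  obtain ⟨a, ha, B, hP⟩ := exists_sub_diagonal_eq_gram hsymm hpos
  obtain ⟨N, K, hN, hA⟩ := exists_sum_intOuter_near B ha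
  set A := ∑ l, ((N l : ℝ) ^ 2)⁻¹ • intOuter (K l)
  have hAsymm (i j : Fin d) : A i j = A j i := by
    simp only [A, Finset.sum_apply, Pi.smul_apply, intOuter, mul_comm]
  set W : (Fin d → Fin d → ℝ) → Fin d → Fin d → ℝ :=
    fun R p q => R p q - A p q - if p = q then a * d else 0
  have hW₀ (i j : Fin d) : |W R₀ i j| < a :=
    calc |W R₀ i j| = dist (∑ l, B l i * B l j) (A i j) := by
          rw [Real.dist_eq, ← hP]
          congr 1
          ring
      _ ≤ dist (fun p q => ∑ l, B l p * B l q) A :=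
          (dist_le_pi_dist (fun q => ∑ l, B l i * B l q) (A i) j).trans
            (dist_le_pi_dist (fun p q => ∑ l, B l p * B l q) A i)
      _ < a := hA
  refine ⟨Sum.elim K (Sum.elim (fun ij => Pi.single ij.1 1 + Pi.single ij.2 1)
      (fun ij => Pi.single ij.1 1 - Pi.single ij.2 1)),
    Sum.elim (fun l _ => ((N l : ℝ) ^ 2)⁻¹) (Sum.elim (fun ij R => (a + W R ij.1 ij.2) / 4)
      (fun ij R => (a - W R ij.1 ij.2) / 4)), ?_, ?_, fun R hR => ?_⟩
  · rintro (l | ij | ij) <;> simp only [Sum.elim_inl, Sum.elim_inr, W] <;> fun_prop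
  · rintro (l | ij | ij) <;> simp only [Sum.elim_inl, Sum.elim_inr]
    · have := hN l
      positivity
    · linarith [(abs_lt.1 (hW₀ ij.1 ij.2)).1]
    · linarith [(abs_lt.1 (hW₀ ij.1 ij.2)).2]
  simp only [Fintype.sum_sum_type, Sum.elim_inl, Sum.elim_inr]
  rw [sum_intOuter_add_sum_intOuter_sub (W R)
    (fun i j => by simp only [W, hR i j, hAsymm i j, eq_comm]) a]
  ext p q
  simp [W, A]

section Gluing

variable {E : Type*} [NormedAddCommGroup E] [NormedSpace ℝ E]

theorem ContDiffAt.mul_sqrt_of_tsupport_subset {n : WithTop ℕ∞} {φ c : E → ℝ} {x : E}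
    (hφ : ContDiffAt ℝ n φ x) (hc : ContDiffAt ℝ n c x) (h : tsupport φ ⊆ {y | 0 < c y}) :
    ContDiffAt ℝ n (fun y => φ y * √(c y)) x := by
  by_cases hx : x ∈ tsupport φ
  · exact hφ.mul ((Real.contDiffAt_sqrt (h hx).ne').comp x hc)
  · refine (contDiffAt_const (c := (0 : ℝ))).congr_of_eventuallyEq ?_
    filter_upwards [notMem_tsupport_iff_eventuallyEq.1 hx] with y hy
    simp [hy]

variable [FiniteDimensional ℝ E] {n : ℕ∞}

theorem exists_sq_partitionOfUnity {K : Set E} (hK : IsCompact K) {U : E → Set E}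
    (hU : ∀ z ∈ K, U z ∈ 𝓝 z) :
    ∃ (s : Finset E) (φ : E → E → ℝ), ↑s ⊆ K ∧ (∀ z ∈ s, ∀ x ∈ K, ContDiffAt ℝ n (φ z) x) ∧
      (∀ z ∈ s, tsupport (φ z) ⊆ U z) ∧ ∀ x ∈ K, ∑ z ∈ s, φ z x ^ 2 = 1 := by
  have hbump (z) (hz : z ∈ K) : ∃ ψ : E → ℝ, tsupport ψ ⊆ U z ∧ ContDiff ℝ n ψ ∧ ψ z = 1 := by
    obtain ⟨ψ, hψU, -, hψ, -, hψz⟩ := exists_contDiff_tsupport_subset (n := n) (hU z hz)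
    exact ⟨ψ, hψU, hψ, hψz⟩
  choose! ψ hψU hψ hψz using hbump
  obtain ⟨s, hsK, hcover⟩ := hK.elim_nhds_subcover (fun z => {x | ψ z x ≠ 0}) fun z hz =>
    (hψ z hz).continuous.isOpen_preimage _ isOpen_ne |>.mem_nhds (by simp [hψz z hz])
  set σ : E → ℝ := fun x => ∑ z ∈ s, ψ z x ^ 2
  have hσ (x) (hx : x ∈ K) : 0 < σ x := by
    obtain ⟨z, hz, hzx⟩ := Set.mem_iUnion₂.1 (hcover hx)
    exact sum_pos' (fun _ _ => sq_nonneg _) ⟨z, hz, sq_pos_of_ne_zero hzx⟩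
  refine ⟨s, fun z x => ψ z x / √(σ x), hsK, fun z hz x hx => ?_, fun z hz => ?_, fun x hx => ?_⟩
  · have hσc : ContDiff ℝ n σ := ContDiff.sum fun z hz => (hψ z (hsK z hz)).pow 2
    exact (hψ z (hsK z hz)).contDiffAt.div
      ((Real.contDiffAt_sqrt (hσ x hx).ne').comp x hσc.contDiffAt) (Real.sqrt_pos.2 (hσ x hx)).ne'
  · refine (closure_mono fun x hx => ?_).trans (hψU z (hsK z hz))
    contrapose! hx
    simp [Function.notMem_support.1 hx]
  · simp_rw [div_pow, Real.sq_sqrt (hσ x hx).le, ← sum_div]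
    exact div_self (hσ x hx).ne'

theorem exists_sq_decomposition_of_local {T F : Type*} [Fintype T] [AddCommGroup F] [Module ℝ F]
    {K : Set E} (hK : IsCompact K) (Φ : E → F) (v : E → T → F) (c : E → T → E → ℝ)
    (hc : ∀ z ∈ K, ∀ t, ContDiff ℝ n (c z t)) (hcz : ∀ z ∈ K, ∀ t, 0 < c z t z)
    (hΦ : ∀ z ∈ K, ∀ x ∈ K, Φ x = ∑ t, c z t x • v z t) :
    ∃ (s : Finset E) (γ : E → T → E → ℝ), (∀ z ∈ s, ∀ t, ContDiffOn ℝ n (γ z t) K) ∧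
      ∀ x ∈ K, Φ x = ∑ z ∈ s, ∑ t, γ z t x ^ 2 • v z t := by
  have hU (z) (hz : z ∈ K) : {x | ∀ t, 0 < c z t x} ∈ 𝓝 z :=
    Filter.eventually_all.2 fun t =>
      continuousAt_const.eventually_lt (hc z hz t).continuous.continuousAt (hcz z hz t)
  obtain ⟨s, φ, hsK, hφ, hφU, hφ1⟩ := exists_sq_partitionOfUnity (n := n) hK hU
  refine ⟨s, fun z t x => φ z x * √(c z t x), fun z hz t x hx => ?_, fun x hx => ?_⟩
  · exact ((hφ z hz x hx).mul_sqrt_of_tsupport_subset (hc z (hsK hz) t).contDiffAt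
      fun y hy => hφU z hz hy t).contDiffWithinAt
  have hsq (z) (hz : z ∈ s) (t) : (φ z x * √(c z t x)) ^ 2 = φ z x ^ 2 * c z t x := by
    by_cases h : φ z x = 0
    · simp [h]
    · rw [mul_pow, Real.sq_sqrt (hφU z hz (subset_tsupport _ h) t).le]
  calc Φ x = ∑ z ∈ s, φ z x ^ 2 • Φ x := by rw [← sum_smul, hφ1 x hx, one_smul]
    _ = _ := sum_congr rfl fun z hz => by
      simp_rw [hΦ z (hsK hz) x hx, smul_sum, hsq z hz, smul_smul]

end Gluing

theorem exists_pos_nsmul_injOn {α M : Type*} [AddCommGroup M] [NoZeroSMulDivisors ℤ M]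
    (J : Finset α) (k : α → M) (hk : ∀ j ∈ J, k j ≠ 0) :
    ∃ n : α → ℕ, (∀ j, 0 < n j) ∧ Set.InjOn (fun j => n j • k j) J := by
  classical
  induction J using Finset.induction_on with
  | empty => exact ⟨fun _ => 1, fun _ => one_pos, by simp⟩
  | insert a J ha ih =>
    obtain ⟨n, hn, hinj⟩ := ih fun j hj => hk j (mem_insert_of_mem hj)
    have hinf : (Set.range fun m : ℕ => (m + 1) • k a).Infinite :=
      Set.infinite_range_of_injective fun m m' h => by
        have := smul_left_injective ℤ (hk a (mem_insert_self a J))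
          (by simpa only [← natCast_zsmul] using h)
        omega
    obtain ⟨-, ⟨m, rfl⟩, hm⟩ := hinf.exists_notMem_finset (J.image fun j => n j • k j)
    refine ⟨Function.update n a (m + 1), fun j => ?_, ?_⟩
    · rcases eq_or_ne j a with rfl | h
      · simp
      · simpa [h] using hn j
    have heq : Set.EqOn (fun j => Function.update n a (m + 1) j • k j) (fun j => n j • k j) J :=
      fun j hj => by simp [ne_of_mem_of_not_mem hj ha]
    rw [coe_insert, Set.injOn_insert (by simpa using ha), heq.injOn_iff]
    refine ⟨hinj, fun ⟨j, hj, hja⟩ => hm ?_⟩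
    simp only [Function.update_self] at hja
    exact mem_image.2 ⟨j, hj, (heq hj).symm.trans hja⟩

theorem exists_sum_sq_unitVec_eq_sum_sq_intOuter {α E : Type*} {d : ℕ} (J : Finset α)
    (k : α → Fin d → ℤ) (γ : α → E → ℝ) :
    ∃ (Λ : Finset (Fin d → ℤ)) (Γ : (Fin d → ℤ) → E → ℝ), 0 ∉ Λ ∧
      (∀ v ∈ Λ, ∃ j ∈ J, ∃ c : ℝ, Γ v = fun x => c * γ j x) ∧
      ∀ x p q, ∑ j ∈ J, γ j x ^ 2 * intOuter (k j) p q =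
        ∑ v ∈ Λ, Γ v x ^ 2 * (unitVec v p * unitVec v q) := by
  classical
  set J' := J.filter (k · ≠ 0)
  obtain ⟨n, hn, hinj⟩ := exists_pos_nsmul_injOn J' k fun j hj => (mem_filter.1 hj).2
  set κ : J' → Fin d → ℤ := fun j => n j • k j
  have hκ : Function.Injective κ := hinj.injective
  set Γ := Function.extend κ (fun j x => intVecNorm (k j) * γ j x) 0
  have hΓ (j : J') : Γ (κ j) = fun x => intVecNorm (k j) * γ j x := hκ.extend_apply _ _ _
  refine ⟨J'.attach.image κ, Γ, ?_, ?_, fun x p q => ?_⟩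
  · simp only [mem_image, not_exists, not_and]
    intro j _ h
    exact (mem_filter.1 j.2).2 ((smul_eq_zero_iff_right (hn j).ne').1 h)
  · simp only [mem_image]
    rintro _ ⟨j, -, rfl⟩
    exact ⟨j, (mem_filter.1 j.2).1, _, hΓ j⟩
  · rw [sum_image fun i _ j _ h => hκ h, ← sum_filter_of_ne (p := (k · ≠ 0)), ← sum_attach]
    · refine sum_congr rfl fun j _ => ?_
      rw [hΓ, unitVec_nsmul (hn j), intOuter_eq_sq_intVecNorm_mul]
      ring
    · intro j _ h hk
      simp [hk, intOuter] at h

theorem geometric_lemma_general (d : ℕ)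
    (K : Set (Fin d → Fin d → ℝ)) (hK : IsCompact K)
    (hsymm : ∀ R ∈ K, ∀ i j, R i j = R j i)
    (hpos : ∀ R ∈ K, ∀ x : Fin d → ℝ, x ≠ 0 → 0 < ∑ i, ∑ j, x i * R i j * x j) :
    ∃ (Λ : Finset (Fin d → ℤ)) (Γ : (Fin d → ℤ) → (Fin d → Fin d → ℝ) → ℝ),
      (0 : Fin d → ℤ) ∉ Λ ∧
      (∀ k ∈ Λ, ContDiffOn ℝ (⊤ : ℕ∞) (Γ k) K) ∧
      (∀ R ∈ K, ∀ i j, R i j = ∑ k ∈ Λ, (Γ k R) ^ 2 * (unitVec k i * unitVec k j)) := by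
  choose! k c hc hcR hdec using fun R₀ (hR₀ : R₀ ∈ K) =>
    exists_local_decomposition (hsymm R₀ hR₀) (hpos R₀ hR₀)
  obtain ⟨s, γ, hγ, hγdec⟩ := exists_sq_decomposition_of_local (n := ⊤) hK id
    (fun z t => intOuter (k z t)) c (fun z hz t => (hc z hz t).of_le le_top) hcR
    fun z hz R hR => hdec z hz R (hsymm R hR)
  obtain ⟨Λ, Γ, hΛ, hΓ, hsum⟩ := exists_sum_sq_unitVec_eq_sum_sq_intOuter (s ×ˢ univ)
    (fun zt => k zt.1 zt.2) (fun zt => γ zt.1 zt.2)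
  refine ⟨Λ, Γ, hΛ, fun v hv => ?_, fun R hR i j => ?_⟩
  · obtain ⟨⟨z, t⟩, hzt, a, hΓv⟩ := hΓ v hv
    rw [hΓv]
    exact contDiffOn_const.mul (hγ z (mem_product.1 hzt).1 t)
  · rw [← hsum, sum_product]
    simpa [Finset.sum_apply] using congrFun₂ (hγdec R hR) i j

/-- **Geometric Lemma (Nash-type decomposition).**
Let `d ≥ 2` and `K` a compact set of symmetric positive definite `d×d` real matrices
(encoded as `Fin d → Fin d → ℝ`).  Then there exist a finite set `Λ ⊂ ℤ^d \ {0}` and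
smooth functions `Γ_k : K → ℝ` such that every `R ∈ K` decomposes as
`R = ∑_{k ∈ Λ} Γ_k(R)² (e_k ⊗ e_k)`. -/
theorem geometric_lemma (d : ℕ) (hd : 2 ≤ d)
    (K : Set (Fin d → Fin d → ℝ)) (hK : IsCompact K)
    (hsymm : ∀ R ∈ K, ∀ i j, R i j = R j i)
    (hpos : ∀ R ∈ K, ∀ x : Fin d → ℝ, x ≠ 0 → 0 < ∑ i, ∑ j, x i * R i j * x j) :
    ∃ (Λ : Finset (Fin d → ℤ)) (Γ : (Fin d → ℤ) → (Fin d → Fin d → ℝ) → ℝ),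
      (0 : Fin d → ℤ) ∉ Λ ∧
      (∀ k ∈ Λ, ContDiffOn ℝ (⊤ : ℕ∞) (Γ k) K) ∧
      (∀ R ∈ K, ∀ i j, R i j = ∑ k ∈ Λ, (Γ k R) ^ 2 * (unitVec k i * unitVec k j)) :=
  geometric_lemma_general d K hK hsymm hpos
end
end

section
/- Improved Hölder inequality on the torus: Let d ≥ 1 and 1 ≤ p ≤ ∞. There exists a constant C > 0, depending only on d and p, such that for all smooth functions a, f : 𝕋^d → ℝ and every σ ∈ ℕ, | ‖a · f(σ·)‖_{L^p(𝕋^d)} − ‖a‖_{L^p(𝕋^d)} ‖f‖_{L^p(𝕋^d)} | ≤ C σ^{−1/p} ‖a‖_{C¹} ‖f‖_{L^p(𝕋^d)}, where f(σ·) denotes the function x ↦ f(σx) on 𝕋^d. -/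
noncomputable section

open MeasureTheory ENNReal

/-- The unit cube in `ℝ^d`, a fundamental domain for the torus `𝕋^d = ℝ^d/ℤ^d`. -/
def cube (d : ℕ) : Set (Fin d → ℝ) := Set.Icc 0 1

/-- A function on `ℝ^d` is `ℤ^d`-periodic, i.e. descends to the torus `𝕋^d`. -/
def ZPeriodic {d : ℕ} {E : Type*} (f : (Fin d → ℝ) → E) : Prop :=
  ∀ (x : Fin d → ℝ) (k : Fin d → ℤ), f (fun i => x i + (k i : ℝ)) = f x

/-- The `C¹` norm `‖a‖_{C¹} = sup |a| + ∑ᵢ sup |∂ᵢ a|`. -/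
def C1Norm {d : ℕ} (a : (Fin d → ℝ) → ℝ) : ℝ :=
  (⨆ x, |a x|) + ∑ i, ⨆ x, |fderiv ℝ a x (Pi.single i 1)|

/-!
Write `f_σ = f(σ ·)` and `N h = ‖a · f(σ · + h)‖_p` for `h` in the unit cube. Since
`f(σx + h) = f_σ(x + h/σ)`, and translations and the dilation `x ↦ σx` preserve integrals of
periodic functions, `N h` differs from `N 0 = ‖a f_σ‖_p` only by replacing `a` with `a(· + h/σ)`,
which is `σ⁻¹ ∑ᵢ sup |∂ᵢ a|`-close to `a` in sup norm; so `|N h - N 0| ≤ σ⁻¹ ∑ᵢ sup |∂ᵢ a| ‖f‖_p`.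
By Tonelli and translation invariance, the `L^p` norm of `h ↦ N h` over the cube is exactly
`‖a‖_p ‖f‖_p`, which therefore lies in the same interval around `N 0`. This gives the bound with
`σ⁻¹ ≤ σ^{-1/p}`; for `p = ∞` there is no decay to prove and `‖a f_σ‖_∞ ≤ sup |a| ‖f‖_∞` suffices.
-/

open Set Pointwise

lemma ContinuousLinearMap.norm_le_sum_abs_apply_single {ι : Type*} [Fintype ι] [DecidableEq ι]
    (L : (ι → ℝ) →L[ℝ] ℝ) : ‖L‖ ≤ ∑ i, |L (Pi.single i 1)| := by
  refine L.opNorm_le_bound (by positivity) fun v => ?_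
  have hv : L v = ∑ i, v i * L (Pi.single i 1) := by
    conv_lhs => rw [← Finset.univ_sum_single v]
    rw [map_sum]
    refine Finset.sum_congr rfl fun i _ => ?_
    rw [← smul_eq_mul, ← L.map_smul, ← Pi.single_smul, smul_eq_mul, mul_one]
  rw [hv, Finset.sum_mul]
  refine (Finset.abs_sum_le_sum_abs _ _).trans (Finset.sum_le_sum fun i _ => ?_)
  rw [abs_mul, mul_comm]
  exact mul_le_mul_of_nonneg_left (norm_le_pi_norm v i) (abs_nonneg _)

lemma abs_toReal_sub_toReal_le {x y D : ℝ≥0∞} (hxy : x ∈ Icc (y - D) (y + D)) (hy : y ≠ ∞)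
    (hD : D ≠ ∞) : |y.toReal - x.toReal| ≤ D.toReal := by
  have hyD : y + D ≠ ∞ := ENNReal.add_ne_top.2 ⟨hy, hD⟩
  have hx : x ≠ ∞ := ne_top_of_le_ne_top hyD hxy.2
  have h₁ := ENNReal.toReal_mono hyD hxy.2
  have h₂ := ENNReal.toReal_mono (ENNReal.add_ne_top.2 ⟨hx, hD⟩) (tsub_le_iff_right.1 hxy.1)
  rw [ENNReal.toReal_add hy hD] at h₁
  rw [ENNReal.toReal_add hx hD] at h₂
  exact abs_sub_le_iff.2 ⟨by linarith, by linarith⟩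

section LpSeminorm

variable {α : Type*} [MeasurableSpace α] {ν : Measure α} {p : ℝ≥0∞}

lemma eLpNorm_mem_Icc_of_ae_mem_Icc [IsProbabilityMeasure ν] (hp : p ≠ 0) {g : α → ℝ≥0∞}
    {lo hi : ℝ≥0∞} (hg : ∀ᵐ x ∂ν, g x ∈ Icc lo hi) : eLpNorm g p ν ∈ Icc lo hi := by
  have hconst : ∀ c : ℝ≥0∞, eLpNorm (fun _ => c) p ν = c := fun c => by
    simp [eLpNorm_const c hp (IsProbabilityMeasure.ne_zero ν)]
  refine ⟨?_, ?_⟩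
  · simpa [hconst] using eLpNorm_mono_enorm_ae (f := fun _ => lo) (p := p) (hg.mono fun _ h => h.1)
  · simpa [hconst] using eLpNorm_mono_enorm_ae (g := fun _ => hi) (p := p) (hg.mono fun _ h => h.2)

lemma eLpNorm_mul_le_eLpNorm_mul_add (hp : 1 ≤ p) {b b' g : α → ℝ}
    (hb : AEStronglyMeasurable b ν) (hb' : AEStronglyMeasurable b' ν)
    (hg : AEStronglyMeasurable g ν) {ε : ℝ} (hε : ∀ x, |b x - b' x| ≤ ε) :
    eLpNorm (b * g) p ν ≤ eLpNorm (b' * g) p ν + ENNReal.ofReal ε * eLpNorm g p ν := by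
  rw [show b * g = b' * g + (b - b') * g by ring]
  refine (eLpNorm_add_le (hb'.mul hg) ((hb.sub hb').mul hg) hp).trans (add_le_add le_rfl ?_)
  refine eLpNorm_le_mul_eLpNorm_of_ae_le_mul (ae_of_all _ fun x => ?_) p
  simpa [abs_mul] using mul_le_mul_of_nonneg_right (hε x) (abs_nonneg (g x))

end LpSeminorm

section Torus

variable {d : ℕ}

local notation "μ" => volume.restrict (cube d)

lemma measurableSet_cube : MeasurableSet (cube d) := measurableSet_Icc

lemma volume_cube : volume (cube d) = 1 := by
  simp [cube, ← pi_univ_Icc, volume_pi_pi, Real.volume_Icc]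

instance : IsProbabilityMeasure μ :=
  ⟨by rw [Measure.restrict_apply_univ, volume_cube]⟩

lemma norm_le_one_of_mem_cube {h : Fin d → ℝ} (hh : h ∈ cube d) : ‖h‖ ≤ 1 :=
  pi_norm_le_iff_of_nonneg zero_le_one |>.2 fun i =>
    abs_le.2 ⟨(neg_one_lt_zero.trans_le (hh.1 i)).le, hh.2 i⟩

namespace ZPeriodic

lemma comp {E F : Type*} {u : (Fin d → ℝ) → E} (hu : ZPeriodic u) (g : E → F) :
    ZPeriodic (g ∘ u) := fun x k => congrArg g (hu x k)

lemma mul {u v : (Fin d → ℝ) → ℝ} (hu : ZPeriodic u) (hv : ZPeriodic v) :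
    ZPeriodic (u * v) := fun x k => by simp only [Pi.mul_apply, hu x k, hv x k]

lemma comp_nsmul {E : Type*} {u : (Fin d → ℝ) → E} (hu : ZPeriodic u) (σ : ℕ) :
    ZPeriodic fun x => u ((σ : ℝ) • x) := fun x k => by
  convert hu ((σ : ℝ) • x) fun i => σ * k i using 2
  funext i
  simp only [Pi.smul_apply, smul_eq_mul, Int.cast_mul, Int.cast_natCast]
  ring

lemma fderiv {u : (Fin d → ℝ) → ℝ} (hu : ZPeriodic u) : ZPeriodic (fderiv ℝ u) :=
  fun x k => (fderiv_comp_add_right (f := u) (x := x) (fun i => (k i : ℝ))).symm.trans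
    (congrArg (_root_.fderiv ℝ · x) (funext fun y => hu y k))

lemma exists_mem_cube_eq {E : Type*} {u : (Fin d → ℝ) → E} (hu : ZPeriodic u)
    (x : Fin d → ℝ) : ∃ y ∈ cube d, u y = u x := by
  refine ⟨fun i => Int.fract (x i),
    ⟨fun i => Int.fract_nonneg _, fun i => (Int.fract_lt_one _).le⟩, ?_⟩
  rw [← hu _ fun i => ⌊x i⌋]
  exact congrArg u (funext fun i => Int.fract_add_floor (x i))

lemma bddAbove_range_abs {u : (Fin d → ℝ) → ℝ} (hu : ZPeriodic u) (hc : Continuous u) :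
    BddAbove (range fun x => |u x|) := by
  obtain ⟨C, hC⟩ := isCompact_Icc.exists_bound_of_continuousOn (s := cube d) hc.continuousOn
  refine ⟨C, forall_mem_range.2 fun x => ?_⟩
  obtain ⟨y, hy, hyx⟩ := hu.exists_mem_cube_eq x
  simpa [← hyx] using hC y hy

lemma memLp {u : (Fin d → ℝ) → ℝ} (hu : ZPeriodic u) (hc : Continuous u) (p : ℝ≥0∞) :
    MemLp u p μ :=
  .of_bound hc.aestronglyMeasurable _ (ae_of_all _ fun x => le_ciSup (hu.bddAbove_range_abs hc) x)

end ZPeriodic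

abbrev intLattice (d : ℕ) : AddSubgroup (Fin d → ℝ) :=
  (Submodule.span ℤ (range (Pi.basisFun ℝ (Fin d)))).toAddSubgroup

instance : Countable (intLattice d) :=
  inferInstanceAs (Countable (Submodule.span ℤ (range (Pi.basisFun ℝ (Fin d)))))

lemma ZPeriodic.vadd_intLattice {E : Type*} {g : (Fin d → ℝ) → E} (hg : ZPeriodic g)
    (ℓ : intLattice d) (x : Fin d → ℝ) : g (ℓ +ᵥ x) = g x := by
  choose k hk using ((Pi.basisFun ℝ (Fin d)).mem_span_iff_repr_mem ℤ ℓ).1 ℓ.2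
  have hk' : ∀ i, (ℓ : Fin d → ℝ) i = k i := fun i => by simpa using (hk i).symm
  rw [← hg x k]
  congr 1
  funext i
  simp [AddSubgroup.vadd_def, hk', add_comm]

lemma restrict_cube_eq_restrict_fundamentalDomain :
    μ = volume.restrict (ZSpan.fundamentalDomain (Pi.basisFun ℝ (Fin d))) := by
  rw [ZSpan.fundamentalDomain_pi_basisFun, cube]
  exact Measure.restrict_congr_set Measure.univ_pi_Ico_ae_eq_Icc.symm

def PreservesPeriodicLIntegral (T : (Fin d → ℝ) → Fin d → ℝ) : Prop :=
  ∀ ψ : (Fin d → ℝ) → ℝ≥0∞, Measurable ψ → ZPeriodic ψ → ∫⁻ x, ψ (T x) ∂μ = ∫⁻ x, ψ x ∂μ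

lemma preservesPeriodicLIntegral_add_right (c : Fin d → ℝ) :
    PreservesPeriodicLIntegral (· + c) := by
  intro ψ hψ hper
  set F := ZSpan.fundamentalDomain (Pi.basisFun ℝ (Fin d))
  have hF : IsAddFundamentalDomain (intLattice d) F volume := ZSpan.isAddFundamentalDomain' _ _
  have hFc : -c +ᵥ F = (· + c) ⁻¹' F := by
    ext x
    simp [mem_vadd_set_iff_neg_vadd_mem, add_comm]
  have hinv : ∀ (ℓ : intLattice d) x, ψ ((ℓ +ᵥ x) + c) = ψ (x + c) := fun ℓ x => by
    rw [vadd_add_assoc]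
    exact hper.vadd_intLattice ℓ (x + c)
  calc ∫⁻ x, ψ (x + c) ∂μ = ∫⁻ x in -c +ᵥ F, ψ (x + c) := by
        rw [restrict_cube_eq_restrict_fundamentalDomain]
        exact hF.setLIntegral_eq (hF.vadd_of_comm (-c)) _ hinv
    _ = ∫⁻ x, ψ x ∂μ := by
        rw [restrict_cube_eq_restrict_fundamentalDomain, hFc]
        exact (measurePreserving_add_right volume c).setLIntegral_comp_preimage
          (ZSpan.fundamentalDomain_measurableSet _) hψ

lemma lintegral_lintegral_mul_comp_add {φ ψ : (Fin d → ℝ) → ℝ≥0∞}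
    (hφ : Measurable φ) (hψ : Measurable ψ) (hper : ZPeriodic ψ)
    {w : (Fin d → ℝ) → Fin d → ℝ} (hw : Measurable w) :
    ∫⁻ h, ∫⁻ x, φ x * ψ (w x + h) ∂μ ∂μ = (∫⁻ x, φ x ∂μ) * ∫⁻ x, ψ x ∂μ := by
  rw [lintegral_lintegral_swap ((hφ.comp measurable_snd).mul
    (hψ.comp ((hw.comp measurable_snd).add measurable_fst))).aemeasurable]
  have hinner : ∀ x, ∫⁻ h, φ x * ψ (w x + h) ∂μ = φ x * ∫⁻ y, ψ y ∂μ := fun x => by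
    simp_rw [add_comm (w x)]
    rw [lintegral_const_mul _ (show Measurable fun h => ψ (h + w x) from
        hψ.comp (measurable_add_const _)),
      preservesPeriodicLIntegral_add_right (w x) ψ hψ hper]
  simp_rw [hinner]
  exact lintegral_mul_const _ hφ

-- Averaging over `h` turns `∫ ψ(σx + h) dx` into `∫ ψ`, and translation invariance makes it
-- independent of `h`.
lemma preservesPeriodicLIntegral_nsmul {σ : ℕ} (hσ : σ ≠ 0) :
    PreservesPeriodicLIntegral fun x : Fin d → ℝ => (σ : ℝ) • x := by
  intro ψ hψ hper
  have hσ' : (σ : ℝ) ≠ 0 := Nat.cast_ne_zero.2 hσ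
  have hconst : ∀ h, ∫⁻ x, ψ ((σ : ℝ) • x + h) ∂μ = ∫⁻ x, ψ ((σ : ℝ) • x) ∂μ := fun h => by
    simpa [smul_add, smul_inv_smul₀ hσ'] using preservesPeriodicLIntegral_add_right
      ((σ : ℝ)⁻¹ • h) _ (hψ.comp (measurable_const_smul _)) (hper.comp_nsmul σ)
  simpa [hconst, volume_cube] using lintegral_lintegral_mul_comp_add (φ := fun _ => 1)
    measurable_const hψ hper (measurable_const_smul (σ : ℝ))

namespace PreservesPeriodicLIntegral

variable {T : (Fin d → ℝ) → Fin d → ℝ}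

lemma map_comp {E : Type*} [MeasurableSpace E] (hT : PreservesPeriodicLIntegral T)
    (hTm : Measurable T) {u : (Fin d → ℝ) → E} (hu : Measurable u) (hper : ZPeriodic u) :
    Measure.map (u ∘ T) μ = Measure.map u μ := by
  ext s hs
  rw [Measure.map_apply (hu.comp hTm) hs, Measure.map_apply hu hs,
    ← lintegral_indicator_one (hu.comp hTm hs), ← lintegral_indicator_one (hu hs)]
  exact hT _ ((measurable_one.indicator hs).comp hu) (hper.comp (s.indicator 1))

lemma eLpNorm_comp (hT : PreservesPeriodicLIntegral T) (hTm : Measurable T)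
    {u : (Fin d → ℝ) → ℝ} (hu : Measurable u) (hper : ZPeriodic u) (p : ℝ≥0∞) :
    eLpNorm (u ∘ T) p μ = eLpNorm u p μ := by
  have h := congrArg (fun ν : Measure ℝ => eLpNorm id p ν) (hT.map_comp hTm hu hper)
  rwa [eLpNorm_map_measure aestronglyMeasurable_id (hu.comp hTm).aemeasurable,
    eLpNorm_map_measure aestronglyMeasurable_id hu.aemeasurable] at h

end PreservesPeriodicLIntegral

lemma eLpNorm_eLpNorm_mul_comp_add {p : ℝ≥0∞} (hp : p ≠ 0) (hp' : p ≠ ∞)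
    {a f : (Fin d → ℝ) → ℝ} (ha : Measurable a) (hf : Measurable f) (hper : ZPeriodic f)
    {w : (Fin d → ℝ) → Fin d → ℝ} (hw : Measurable w) :
    eLpNorm (fun h => eLpNorm (fun x => a x * f (w x + h)) p μ) p μ =
      eLpNorm a p μ * eLpNorm f p μ := by
  have hq : 0 < p.toReal := ENNReal.toReal_pos hp hp'
  simp only [eLpNorm_eq_eLpNorm' hp hp']
  refine ENNReal.rpow_left_injective hq.ne' ?_
  simp only [← lintegral_rpow_enorm_eq_rpow_eLpNorm' hq, enorm_eq_self, enorm_mul,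
    ENNReal.mul_rpow_of_nonneg _ _ hq.le]
  exact lintegral_lintegral_mul_comp_add (ha.enorm.pow_const _) (hf.enorm.pow_const _)
    (hper.comp fun y => ‖y‖ₑ ^ p.toReal) hw

lemma eLpNorm_comp_nsmul_add {f : (Fin d → ℝ) → ℝ} (hfper : ZPeriodic f) (hf : Continuous f)
    {σ : ℕ} (hσ : σ ≠ 0) (p : ℝ≥0∞) (c : Fin d → ℝ) :
    eLpNorm (fun x => f ((σ : ℝ) • (x + c))) p μ = eLpNorm f p μ := by
  rw [← (preservesPeriodicLIntegral_nsmul hσ).eLpNorm_comp (measurable_const_smul _)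
    hf.measurable hfper p]
  exact (preservesPeriodicLIntegral_add_right c).eLpNorm_comp (measurable_add_const c)
    (hf.measurable.comp (measurable_const_smul _)) (hfper.comp_nsmul σ) p

def C1Seminorm (a : (Fin d → ℝ) → ℝ) : ℝ :=
  ∑ i, ⨆ x, |fderiv ℝ a x (Pi.single i 1)|

variable {a f : (Fin d → ℝ) → ℝ} {σ : ℕ}

lemma C1Seminorm_nonneg : 0 ≤ C1Seminorm a :=
  Finset.sum_nonneg fun _ _ => Real.iSup_nonneg fun _ => abs_nonneg _

lemma iSup_abs_le_C1Norm : (⨆ x, |a x|) ≤ C1Norm a :=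
  le_add_of_nonneg_right C1Seminorm_nonneg

lemma C1Seminorm_le_C1Norm : C1Seminorm a ≤ C1Norm a :=
  le_add_of_nonneg_left (Real.iSup_nonneg fun _ => abs_nonneg _)

lemma norm_fderiv_le_C1Seminorm (ha : ContDiff ℝ 1 a) (hper : ZPeriodic a) (z : Fin d → ℝ) :
    ‖fderiv ℝ a z‖ ≤ C1Seminorm a := by
  refine (fderiv ℝ a z).norm_le_sum_abs_apply_single.trans (Finset.sum_le_sum fun i _ => ?_)
  refine le_ciSup (ZPeriodic.bddAbove_range_abs (hper.fderiv.comp (· (Pi.single i 1))) ?_) z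
  exact (ha.continuous_fderiv one_ne_zero).clm_apply continuous_const

lemma abs_sub_le_C1Seminorm_mul_norm (ha : ContDiff ℝ 1 a) (hper : ZPeriodic a)
    (x y : Fin d → ℝ) : |a x - a y| ≤ C1Seminorm a * ‖x - y‖ :=
  convex_univ.norm_image_sub_le_of_norm_fderiv_le (fun z _ => ha.differentiable one_ne_zero z)
    (fun z _ => norm_fderiv_le_C1Seminorm ha hper z) (mem_univ y) (mem_univ x)

lemma abs_eLpNorm_mul_comp_nsmul_sub_le_iSup (ha : Continuous a) (haper : ZPeriodic a)
    (hf : Continuous f) (hfper : ZPeriodic f) (hσ : σ ≠ 0) (p : ℝ≥0∞) :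
    |(eLpNorm (fun x => a x * f ((σ : ℝ) • x)) p μ).toReal
        - (eLpNorm a p μ).toReal * (eLpNorm f p μ).toReal|
      ≤ (⨆ x, |a x|) * (eLpNorm f p μ).toReal := by
  set M := ⨆ x, |a x|
  have hM : ∀ x, |a x| ≤ M := le_ciSup (haper.bddAbove_range_abs ha)
  have hM0 : 0 ≤ M := (abs_nonneg _).trans (hM 0)
  have hF := (hfper.memLp hf p).eLpNorm_ne_top
  have hN : eLpNorm (fun x => a x * f ((σ : ℝ) • x)) p μ ≤ ENNReal.ofReal M * eLpNorm f p μ := by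
    calc _ ≤ ENNReal.ofReal M * eLpNorm (fun x => f ((σ : ℝ) • x)) p μ :=
          eLpNorm_le_mul_eLpNorm_of_ae_le_mul (ae_of_all _ fun x => by
            simpa [abs_mul] using mul_le_mul_of_nonneg_right (hM x) (abs_nonneg _)) p
      _ = _ := by simpa only [add_zero] using
          congrArg (ENNReal.ofReal M * ·) (eLpNorm_comp_nsmul_add hfper hf hσ p 0)
  have hA : eLpNorm a p μ ≤ ENNReal.ofReal M := by
    simpa using eLpNorm_le_of_ae_bound (p := p) (ae_of_all μ hM)
  have hN' := ENNReal.toReal_mono (ENNReal.mul_ne_top ENNReal.ofReal_ne_top hF) hN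
  have hA' := ENNReal.toReal_mono ENNReal.ofReal_ne_top hA
  rw [ENNReal.toReal_mul, ENNReal.toReal_ofReal hM0] at hN'
  rw [ENNReal.toReal_ofReal hM0] at hA'
  exact abs_sub_le_of_nonneg_of_le ENNReal.toReal_nonneg hN'
    (mul_nonneg ENNReal.toReal_nonneg ENNReal.toReal_nonneg)
    (mul_le_mul_of_nonneg_right hA' ENNReal.toReal_nonneg)

lemma eLpNorm_mul_comp_nsmul_add_mem_Icc {p : ℝ≥0∞} (hp : 1 ≤ p) (ha : ContDiff ℝ 1 a)
    (haper : ZPeriodic a) (hf : Continuous f) (hfper : ZPeriodic f) (hσ : σ ≠ 0)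
    {h : Fin d → ℝ} (hh : h ∈ cube d) :
    eLpNorm (fun x => a x * f ((σ : ℝ) • x + h)) p μ ∈
      Icc (eLpNorm (fun x => a x * f ((σ : ℝ) • x)) p μ -
          ENNReal.ofReal (C1Seminorm a * (σ : ℝ)⁻¹) * eLpNorm f p μ)
        (eLpNorm (fun x => a x * f ((σ : ℝ) • x)) p μ +
          ENNReal.ofReal (C1Seminorm a * (σ : ℝ)⁻¹) * eLpNorm f p μ) := by
  set c := (σ : ℝ)⁻¹ • h
  have hc : ∀ x, |a x - a (x + c)| ≤ C1Seminorm a * (σ : ℝ)⁻¹ := fun x => by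
    refine (abs_sub_le_C1Seminorm_mul_norm ha haper x (x + c)).trans ?_
    rw [sub_add_cancel_left, norm_neg, norm_smul, norm_inv, RCLike.norm_natCast]
    gcongr
    · exact C1Seminorm_nonneg
    · exact mul_le_of_le_one_right (by positivity) (norm_le_one_of_mem_cube hh)
  have hac := ha.continuous
  have hNc : eLpNorm (fun x => a (x + c) * f ((σ : ℝ) • (x + c))) p μ =
      eLpNorm (fun x => a x * f ((σ : ℝ) • x)) p μ :=
    (preservesPeriodicLIntegral_add_right c).eLpNorm_comp (measurable_add_const c)
      (hac.mul (hf.comp (continuous_const_smul _))).measurable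
      (haper.mul (hfper.comp_nsmul σ)) p
  have hshift : (fun x => a x * f ((σ : ℝ) • x + h)) = fun x => a x * f ((σ : ℝ) • (x + c)) := by
    simp [c, smul_add, smul_inv_smul₀ (Nat.cast_ne_zero.2 hσ : (σ : ℝ) ≠ 0)]
  have hfc : AEStronglyMeasurable (fun x => f ((σ : ℝ) • (x + c))) μ :=
    (hf.comp ((continuous_const_smul _).comp (continuous_add_const c))).aestronglyMeasurable
  have hac' : AEStronglyMeasurable (fun x => a (x + c)) μ :=
    (hac.comp (continuous_add_const c)).aestronglyMeasurable
  rw [hshift, ← hNc, ← eLpNorm_comp_nsmul_add hfper hf hσ p c]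
  constructor
  · rw [tsub_le_iff_right]
    exact eLpNorm_mul_le_eLpNorm_mul_add hp hac' hac.aestronglyMeasurable hfc
      fun x => by rw [abs_sub_comm]; exact hc x
  · exact eLpNorm_mul_le_eLpNorm_mul_add hp hac.aestronglyMeasurable hac' hfc hc

lemma abs_eLpNorm_mul_comp_nsmul_sub_le {p : ℝ≥0∞} (hp : 1 ≤ p) (hp' : p ≠ ∞)
    (ha : ContDiff ℝ 1 a) (haper : ZPeriodic a) (hf : Continuous f) (hfper : ZPeriodic f)
    (hσ : σ ≠ 0) :
    |(eLpNorm (fun x => a x * f ((σ : ℝ) • x)) p μ).toReal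
        - (eLpNorm a p μ).toReal * (eLpNorm f p μ).toReal|
      ≤ C1Seminorm a * (σ : ℝ)⁻¹ * (eLpNorm f p μ).toReal := by
  have hp0 : p ≠ 0 := (zero_lt_one.trans_le hp).ne'
  have hmem := eLpNorm_mem_Icc_of_ae_mem_Icc (ν := μ) hp0 <| ae_restrict_of_forall_mem
    measurableSet_cube fun h hh => eLpNorm_mul_comp_nsmul_add_mem_Icc hp ha haper hf hfper hσ hh
  rw [eLpNorm_eLpNorm_mul_comp_add hp0 hp' ha.continuous.measurable hf.measurable hfper
    (measurable_const_smul (σ : ℝ))] at hmem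
  have hD := abs_toReal_sub_toReal_le hmem
    ((haper.mul (hfper.comp_nsmul σ)).memLp (ha.continuous.mul
      (hf.comp (continuous_const_smul _))) p).eLpNorm_ne_top
    (ENNReal.mul_ne_top ENNReal.ofReal_ne_top ((hfper.memLp hf p).eLpNorm_ne_top))
  rwa [ENNReal.toReal_mul, ENNReal.toReal_mul, ENNReal.toReal_ofReal
    (mul_nonneg C1Seminorm_nonneg (by positivity))] at hD

end Torus

theorem improved_holder_torus_general (d : ℕ) (p : ℝ≥0∞) (hp : 1 ≤ p) :
    ∃ C : ℝ, 0 < C ∧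
      ∀ (a f : (Fin d → ℝ) → ℝ), ContDiff ℝ (⊤ : ℕ∞) a → ZPeriodic a →
        ContDiff ℝ (⊤ : ℕ∞) f → ZPeriodic f → ∀ σ : ℕ, 0 < σ →
        |(eLpNorm (fun x => a x * f ((σ : ℝ) • x)) p (volume.restrict (cube d))).toReal
            - (eLpNorm a p (volume.restrict (cube d))).toReal *
              (eLpNorm f p (volume.restrict (cube d))).toReal|
          ≤ C * (σ : ℝ) ^ (-(1 / p.toReal)) * C1Norm a *
              (eLpNorm f p (volume.restrict (cube d))).toReal := by
  refine ⟨1, one_pos, fun a f ha haper hf hfper σ hσ => ?_⟩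
  rw [one_mul]
  rcases eq_or_ne p ∞ with rfl | hp'
  · calc _ ≤ (⨆ x, |a x|) * (eLpNorm f ∞ (volume.restrict (cube d))).toReal :=
          abs_eLpNorm_mul_comp_nsmul_sub_le_iSup ha.continuous haper hf.continuous hfper hσ.ne' ∞
      _ ≤ _ := by
          rw [toReal_top, _root_.div_zero, neg_zero, Real.rpow_zero, one_mul]
          gcongr
          exact iSup_abs_le_C1Norm
  · have hr : 1 ≤ p.toReal := by simpa using ENNReal.toReal_mono hp' hp
    have hdecay : (σ : ℝ)⁻¹ ≤ (σ : ℝ) ^ (-(1 / p.toReal)) := by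
      rw [← Real.rpow_neg_one]
      exact Real.rpow_le_rpow_of_exponent_le (Nat.one_le_cast.2 hσ)
        (neg_le_neg ((div_le_one (by positivity)).2 hr))
    calc _ ≤ C1Seminorm a * (σ : ℝ)⁻¹ * (eLpNorm f p (volume.restrict (cube d))).toReal :=
          abs_eLpNorm_mul_comp_nsmul_sub_le hp hp' (ha.of_le (by simp)) haper hf.continuous hfper
            hσ.ne'
      _ ≤ _ := by
          rw [mul_comm (C1Seminorm a)]
          gcongr
          exacts [C1Seminorm_nonneg, C1Seminorm_le_C1Norm]

/-- **Improved Hölder inequality on the torus.**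
For `d ≥ 1` and `1 ≤ p ≤ ∞` there is a constant `C = C(d,p) > 0` such that for all smooth
`a, f : 𝕋^d → ℝ` and every `σ ∈ ℕ`, `σ ≥ 1`,
`| ‖a·f(σ·)‖_{L^p} − ‖a‖_{L^p} ‖f‖_{L^p} | ≤ C σ^{−1/p} ‖a‖_{C¹} ‖f‖_{L^p}`. -/
theorem improved_holder_torus (d : ℕ) (hd : 1 ≤ d) (p : ℝ≥0∞) (hp : 1 ≤ p) :
    ∃ C : ℝ, 0 < C ∧
      ∀ (a f : (Fin d → ℝ) → ℝ), ContDiff ℝ (⊤ : ℕ∞) a → ZPeriodic a →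
        ContDiff ℝ (⊤ : ℕ∞) f → ZPeriodic f → ∀ σ : ℕ, 0 < σ →
        |(eLpNorm (fun x => a x * f ((σ : ℝ) • x)) p (volume.restrict (cube d))).toReal
            - (eLpNorm a p (volume.restrict (cube d))).toReal *
              (eLpNorm f p (volume.restrict (cube d))).toReal|
          ≤ C * (σ : ℝ) ^ (-(1 / p.toReal)) * C1Norm a *
              (eLpNorm f p (volume.restrict (cube d))).toReal :=
  improved_holder_torus_general d p hp
end
end
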